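/- arXiv:1809.04052 — 11 statements merged into one kernel-verified Lean document; each statement's English description precedes it below -/
import Mathlib

section
/- For nonnegative vectors x, y in R^n (each with at least one positive entry), the probability that argmin_j (-log U_j)/x_j equals argmin_j (-log U_j)/y_j, where U_1,...,U_n are i.i.d. uniform on (0,1], equals J_P(x,y) = sum over indices i with x_i>0 and y_i>0 of 1 / (sum_j max(x_j/x_i, y_j/y_i)). -/
open MeasureTheory ProbabilityTheory Finset

/-!
Put `E_j = -log U_j`; almost surely every `U_j` lies in `(0, 1)`, so every `E_j` is
positive. Then both hashes equal `i` exactly when `x_i, y_i > 0` and `m_{ij} E_i < E_j` for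
all `j ≠ i`, where `m_{ij} = max (x_j / x_i) (y_j / y_i)`, i.e. when `U_j < U_i ^ m_{ij}` for
all `j ≠ i`. Conditioning on `U_i = t` this has probability `∏_{j ≠ i} t ^ m_{ij}`, and
`∫₀¹ t ^ (∑_{j ≠ i} m_{ij}) dt = 1 / ∑_j m_{ij}` since `m_{ii} = 1`. A strict argmin is
unique, so these events are disjoint in `i`, and summing over `i` gives `J_P(x, y)`.
-/

open Classical in
/-- The probability Jaccard similarity of two nonnegative vectors. -/
noncomputable def JP {ι : Type*} [Fintype ι] (x y : ι → ℝ) : ℝ :=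
  ∑ i ∈ Finset.univ.filter (fun i => 0 < x i ∧ 0 < y i),
    (∑ j, max (x j / x i) (y j / y i))⁻¹

theorem ENNReal.ofReal_div_lt_ofReal_div_iff {a b c d : ℝ} (ha : 0 ≤ a) (hb : 0 < b)
    (hc : 0 < c) :
    ENNReal.ofReal a / ENNReal.ofReal c < ENNReal.ofReal b / ENNReal.ofReal d ↔
      d / c * a < b := by
  rcases le_or_gt d 0 with hd | hd
  · refine iff_of_true ?_ ?_
    · rw [ENNReal.ofReal_of_nonpos hd, ENNReal.div_zero (ENNReal.ofReal_pos.2 hb).ne']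
      exact ENNReal.div_lt_top ENNReal.ofReal_ne_top (ENNReal.ofReal_pos.2 hc).ne'
    · exact (mul_nonpos_of_nonpos_of_nonneg (div_nonpos_of_nonpos_of_nonneg hd hc.le) ha).trans_lt
        hb
  · rw [← ENNReal.ofReal_div_of_pos hc, ← ENNReal.ofReal_div_of_pos hd,
      ENNReal.ofReal_lt_ofReal_iff (div_pos hb hd), div_lt_div_iff₀ hc hd,
      div_mul_eq_mul_div, div_lt_iff₀ hc, mul_comm d]

section ArgminRatio

variable {ι : Type*} {e x y : ι → ℝ} {i : ι}

/-- `H(x) = i` in the paper's notation, for `E = e`; the division in `ℝ≥0∞` realises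
`e / 0 = ∞`. -/
def IsStrictArgminRatio (e x : ι → ℝ) (i : ι) : Prop :=
  ∀ j ≠ i,
    ENNReal.ofReal (e i) / ENNReal.ofReal (x i) < ENNReal.ofReal (e j) / ENNReal.ofReal (x j)

theorem IsStrictArgminRatio.unique {i' : ι} (h : IsStrictArgminRatio e x i)
    (h' : IsStrictArgminRatio e x i') : i = i' := by
  by_contra hne
  exact lt_asymm (h i' (Ne.symm hne)) (h' i hne)

theorem IsStrictArgminRatio.pos (h : IsStrictArgminRatio e x i) (hei : 0 < e i)
    (hx : ∃ j, 0 < x j) : 0 < x i := by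
  by_contra hxi
  obtain ⟨k, hk⟩ := hx
  have hlt := h k (by rintro rfl; exact hxi hk)
  rw [ENNReal.ofReal_of_nonpos (not_lt.1 hxi),
    ENNReal.div_zero (ENNReal.ofReal_pos.2 hei).ne'] at hlt
  exact not_top_lt hlt

theorem isStrictArgminRatio_iff (he : ∀ j, 0 < e j) (hxi : 0 < x i) :
    IsStrictArgminRatio e x i ↔ ∀ j ≠ i, x j / x i * e i < e j :=
  forall₂_congr fun j _ => ENNReal.ofReal_div_lt_ofReal_div_iff (he i).le (he j) hxi

theorem isStrictArgminRatio_and_iff (he : ∀ j, 0 < e j) (hxi : 0 < x i) (hyi : 0 < y i) :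
    IsStrictArgminRatio e x i ∧ IsStrictArgminRatio e y i ↔
      ∀ j ≠ i, max (x j / x i) (y j / y i) * e i < e j := by
  simp only [isStrictArgminRatio_iff he hxi, isStrictArgminRatio_iff he hyi,
    max_mul_of_nonneg _ _ (he i).le, max_lt_iff, ← forall_and]

end ArgminRatio

theorem measure_pi_setOf_forall_succAbove_lt {n : ℕ} (μ : Fin (n + 1) → Measure ℝ)
    [∀ i, SigmaFinite (μ i)] (i : Fin (n + 1)) {f : Fin n → ℝ → ℝ}
    (hf : ∀ k, Measurable (f k)) :
    Measure.pi μ {u | ∀ k, u (i.succAbove k) < f k (u i)}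
      = ∫⁻ t, ∏ k, μ (i.succAbove k) (Set.Iio (f k t)) ∂μ i := by
  have hS : MeasurableSet {p : ℝ × (Fin n → ℝ) | ∀ k, p.2 k < f k p.1} := by
    simp only [Set.ofPred_forall]
    exact MeasurableSet.iInter fun k => measurableSet_lt
      ((measurable_pi_apply k).comp measurable_snd) ((hf k).comp measurable_fst)
  refine ((measurePreserving_piFinSuccAbove μ i).measure_preimage hS.nullMeasurableSet).trans ?_
  rw [Measure.prod_apply hS]
  refine lintegral_congr fun t => ?_
  rw [← Measure.pi_pi]
  congr 1 with v
  simp [Set.mem_pi]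

theorem volume_restrict_Ioc_zero_one_Iio {c : ℝ} (hc : c ≤ 1) :
    volume.restrict (Set.Ioc (0 : ℝ) 1) (Set.Iio c) = ENNReal.ofReal c := by
  have : Set.Iio c ∩ Set.Ioc 0 1 = Set.Ioo 0 c := by
    ext t
    simp only [Set.mem_inter_iff, Set.mem_Iio, Set.mem_Ioc, Set.mem_Ioo]
    grind
  rw [Measure.restrict_apply measurableSet_Iio, this, Real.volume_Ioo, sub_zero]

theorem lintegral_Ioc_zero_one_ofReal_rpow {s : ℝ} (hs : -1 < s) :
    ∫⁻ t in Set.Ioc (0 : ℝ) 1, ENNReal.ofReal (t ^ s) = ENNReal.ofReal (s + 1)⁻¹ := by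
  have hint : IntegrableOn (fun t : ℝ => t ^ s) (Set.Ioc 0 1) :=
    (intervalIntegral.intervalIntegrable_rpow' hs).1
  rw [← ofReal_integral_eq_lintegral_ofReal hint
    ((ae_restrict_iff' measurableSet_Ioc).2 (.of_forall fun t ht => Real.rpow_nonneg ht.1.le _)),
    ← intervalIntegral.integral_of_le zero_le_one, integral_rpow (.inl hs),
    Real.one_rpow, Real.zero_rpow (by linarith), sub_zero, one_div]

theorem measure_pi_Ioc_zero_one_forall_succAbove_lt_rpow {n : ℕ} (i : Fin (n + 1))
    {m : Fin n → ℝ} (hm : ∀ k, 0 ≤ m k) :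
    Measure.pi (fun _ => volume.restrict (Set.Ioc (0 : ℝ) 1))
        {u | ∀ k, u (i.succAbove k) < u i ^ m k}
      = ENNReal.ofReal (1 + ∑ k, m k)⁻¹ := by
  rw [measure_pi_setOf_forall_succAbove_lt _ i (f := fun k t => t ^ m k) fun k => by fun_prop]
  have hprod : ∀ t ∈ Set.Ioc (0 : ℝ) 1,
      ∏ k, volume.restrict (Set.Ioc (0 : ℝ) 1) (Set.Iio (t ^ m k))
        = ENNReal.ofReal (t ^ ∑ k, m k) := fun t ht => by
    rw [Real.rpow_sum_of_pos ht.1,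
      ENNReal.ofReal_prod_of_nonneg fun k _ => Real.rpow_nonneg ht.1.le _]
    exact prod_congr rfl fun k _ =>
      volume_restrict_Ioc_zero_one_Iio (Real.rpow_le_one ht.1.le ht.2 (hm k))
  rw [setLIntegral_congr_fun measurableSet_Ioc hprod,
    lintegral_Ioc_zero_one_ofReal_rpow (by linarith [sum_nonneg fun k (_ : k ∈ univ) => hm k]),
    add_comm]

theorem neg_log_pos_of_mem_Ioo {t : ℝ} (ht : t ∈ Set.Ioo 0 1) : 0 < -Real.log t :=
  neg_pos.2 (Real.log_neg ht.1 ht.2)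

section Collision

open Function

variable {ι : Type*}

/-- The event `H(x) = H(y) = i`, with `u j = U_j`. -/
def collisionSet (x y : ι → ℝ) (i : ι) : Set (ι → ℝ) :=
  {u | IsStrictArgminRatio (fun j => -Real.log (u j)) x i ∧
    IsStrictArgminRatio (fun j => -Real.log (u j)) y i}

theorem pairwise_disjoint_collisionSet (x y : ι → ℝ) :
    Pairwise (Disjoint on (collisionSet x y)) :=
  fun _ _ hne => Set.disjoint_left.2 fun _ hu hu' => hne (hu.1.unique hu'.1)

theorem measurableSet_collisionSet [Countable ι] (x y : ι → ℝ) (i : ι) :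
    MeasurableSet (collisionSet x y i) := by
  unfold collisionSet IsStrictArgminRatio
  measurability

theorem mem_collisionSet_iff {x y u : ι → ℝ} {i : ι} (hu : ∀ j, u j ∈ Set.Ioo 0 1)
    (hxi : 0 < x i) (hyi : 0 < y i) :
    u ∈ collisionSet x y i ↔ ∀ j ≠ i, u j < u i ^ max (x j / x i) (y j / y i) := by
  have he j : 0 < -Real.log (u j) := neg_log_pos_of_mem_Ioo (hu j)
  refine (isStrictArgminRatio_and_iff he hxi hyi).trans (forall₂_congr fun j _ => ?_)
  rw [Real.lt_rpow_iff_log_lt (hu j).1 (hu i).1, mul_neg, neg_lt_neg_iff]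

theorem ae_pi_Ioc_zero_one_mem_Ioo [Fintype ι] :
    ∀ᵐ u ∂Measure.pi (fun _ : ι => volume.restrict (Set.Ioc (0 : ℝ) 1)),
      ∀ j, u j ∈ Set.Ioo 0 1 :=
  ae_all_iff.2 fun _ => Measure.tendsto_eval_ae_ae.eventually <| by
    rw [← Measure.restrict_congr_set Ioo_ae_eq_Ioc]
    exact ae_restrict_mem measurableSet_Ioo

end Collision

theorem measure_pi_Ioc_zero_one_collisionSet {n : ℕ} {x y : Fin (n + 1) → ℝ}
    (hx : ∀ j, 0 ≤ x j) (hxpos : ∃ j, 0 < x j) (hypos : ∃ j, 0 < y j) (i : Fin (n + 1)) :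
    Measure.pi (fun _ => volume.restrict (Set.Ioc (0 : ℝ) 1)) (collisionSet x y i) =
      if 0 < x i ∧ 0 < y i then ENNReal.ofReal (∑ j, max (x j / x i) (y j / y i))⁻¹
      else 0 := by
  split_ifs with hi
  · obtain ⟨hxi, hyi⟩ := hi
    set m := fun j => max (x j / x i) (y j / y i)
    have hm : ∀ j, 0 ≤ m j := fun j => (div_nonneg (hx j) hxi.le).trans (le_max_left _ _)
    have hmi : m i = 1 := by simp [m, hxi.ne', hyi.ne']
    calc _ = Measure.pi (fun _ => volume.restrict (Set.Ioc (0 : ℝ) 1))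
          {u | ∀ k, u (i.succAbove k) < u i ^ m (i.succAbove k)} := by
          refine measure_congr (Filter.eventuallyEq_set.2 ?_)
          filter_upwards [ae_pi_Ioc_zero_one_mem_Ioo] with u hu
          rw [mem_collisionSet_iff hu hxi hyi, Fin.forall_iff_succAbove i]
          simp [Fin.succAbove_ne, m]
      _ = _ := by
          rw [measure_pi_Ioc_zero_one_forall_succAbove_lt_rpow i fun k => hm _,
            Fin.sum_univ_succAbove m i, hmi]
  · rw [measure_eq_zero_iff_ae_notMem]
    filter_upwards [ae_pi_Ioc_zero_one_mem_Ioo] with u hu hmem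
    have hei := neg_log_pos_of_mem_Ioo (hu i)
    exact hi ⟨hmem.1.pos hei hxpos, hmem.2.pos hei hypos⟩

theorem prob_collision_eq_JP_general {n : ℕ} (x y : Fin n → ℝ)
    (hx : ∀ j, 0 ≤ x j)
    (hxpos : ∃ j, 0 < x j) (hypos : ∃ j, 0 < y j)
    {Ω : Type*} [MeasurableSpace Ω] (μ : Measure Ω) [IsProbabilityMeasure μ]
    (U : Fin n → Ω → ℝ) (hmeas : ∀ j, Measurable (U j))
    (hindep : iIndepFun U μ)
    (hunif : ∀ j, μ.map (U j) = volume.restrict (Set.Ioc (0 : ℝ) 1)) :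
    (μ {ω | ∃ i : Fin n,
        (∀ j, j ≠ i →
          ENNReal.ofReal (-Real.log (U i ω)) / ENNReal.ofReal (x i)
            < ENNReal.ofReal (-Real.log (U j ω)) / ENNReal.ofReal (x j)) ∧
        (∀ j, j ≠ i →
          ENNReal.ofReal (-Real.log (U i ω)) / ENNReal.ofReal (y i)
            < ENNReal.ofReal (-Real.log (U j ω)) / ENNReal.ofReal (y j))}).toReal
      = JP x y := by
  cases n with
  | zero => exact (IsEmpty.false hxpos.choose).elim
  | succ n =>
  have hlaw : μ.map (fun ω j => U j ω)
      = Measure.pi fun _ => volume.restrict (Set.Ioc (0 : ℝ) 1) := by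
    rw [hindep.map_fun_eq_pi_map fun j => (hmeas j).aemeasurable]
    simp only [hunif]
  show (μ ((fun ω j => U j ω) ⁻¹' {u | ∃ i, u ∈ collisionSet x y i})).toReal = _
  simp only [Set.ofPred_exists, Set.ofPred_mem_eq]
  rw [← Measure.map_apply (measurable_pi_lambda _ hmeas)
      (.iUnion fun i => measurableSet_collisionSet x y i), hlaw,
    measure_iUnion (pairwise_disjoint_collisionSet x y) (measurableSet_collisionSet x y),
    tsum_fintype, ENNReal.toReal_sum fun i _ => measure_ne_top _ _, JP, sum_filter]
  refine sum_congr rfl fun i _ => ?_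
  rw [measure_pi_Ioc_zero_one_collisionSet hx hxpos hypos i]
  split_ifs with hi
  · exact ENNReal.toReal_ofReal <| inv_nonneg.2 <| sum_nonneg fun j _ =>
      (div_nonneg (hx j) hi.1.le).trans (le_max_left _ _)
  · rfl

/-- For i.i.d. uniform `U_j` on `(0,1]`, the probability that the strict argmin of
`(-log U_j)/x_j` coincides with the strict argmin of `(-log U_j)/y_j` (convention
`1/0 = ∞`) equals `J_P(x, y)`. -/
theorem prob_collision_eq_JP {n : ℕ} (x y : Fin n → ℝ)
    (hx : ∀ j, 0 ≤ x j) (hy : ∀ j, 0 ≤ y j)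
    (hxpos : ∃ j, 0 < x j) (hypos : ∃ j, 0 < y j)
    {Ω : Type*} [MeasurableSpace Ω] (μ : Measure Ω) [IsProbabilityMeasure μ]
    (U : Fin n → Ω → ℝ) (hmeas : ∀ j, Measurable (U j))
    (hindep : iIndepFun U μ)
    (hunif : ∀ j, μ.map (U j) = volume.restrict (Set.Ioc (0 : ℝ) 1)) :
    (μ {ω | ∃ i : Fin n,
        (∀ j, j ≠ i →
          ENNReal.ofReal (-Real.log (U i ω)) / ENNReal.ofReal (x i)
            < ENNReal.ofReal (-Real.log (U j ω)) / ENNReal.ofReal (x j)) ∧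
        (∀ j, j ≠ i →
          ENNReal.ofReal (-Real.log (U i ω)) / ENNReal.ofReal (y i)
            < ENNReal.ofReal (-Real.log (U j ω)) / ENNReal.ofReal (y j))}).toReal
      = JP x y :=
  prob_collision_eq_JP_general x y hx hxpos hypos μ U hmeas hindep hunif
end

section
/- If x and y are the uniform probability distributions on finite nonempty sets X and Y respectively (viewed as vectors over X ∪ Y), then J_P(x,y) equals the Jaccard index |X ∩ Y| / |X ∪ Y|. -/
open Finset

open Classical in
/-- For uniform distributions on finite nonempty sets `X` and `Y`, viewed as vectors over
their union, `J_P` equals the Jaccard index `|X ∩ Y| / |X ∪ Y|`. -/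
theorem JP_uniform_eq_jaccard {ι : Type*} [Fintype ι] (X Y : Finset ι)
    (hX : X.Nonempty) (hY : Y.Nonempty) :
    JP (fun i => if i ∈ X then (X.card : ℝ)⁻¹ else 0)
       (fun i => if i ∈ Y then (Y.card : ℝ)⁻¹ else 0)
      = ((X ∩ Y).card : ℝ) / ((X ∪ Y).card : ℝ) := by
  classical
  have hXc : (0:ℝ) < X.card := by exact_mod_cast Finset.card_pos.mpr hX
  have hYc : (0:ℝ) < Y.card := by exact_mod_cast Finset.card_pos.mpr hY
  unfold JP
  have hfilter : (Finset.univ.filter (fun i =>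
      0 < (if i ∈ X then (X.card : ℝ)⁻¹ else 0) ∧
      0 < (if i ∈ Y then (Y.card : ℝ)⁻¹ else 0))) = X ∩ Y := by
    ext i
    simp only [mem_filter, mem_univ, true_and, mem_inter]
    constructor
    · rintro ⟨h1, h2⟩
      refine ⟨?_, ?_⟩
      · by_contra hx; simp [hx] at h1
      · by_contra hy; simp [hy] at h2
    · rintro ⟨hx, hy⟩
      simp [hx, hy, inv_pos, hXc, hYc]
  rw [hfilter]
  have hterm : ∀ i ∈ X ∩ Y,
      (∑ j, max ((if j ∈ X then (X.card : ℝ)⁻¹ else 0) / (if i ∈ X then (X.card : ℝ)⁻¹ else 0))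
        ((if j ∈ Y then (Y.card : ℝ)⁻¹ else 0) / (if i ∈ Y then (Y.card : ℝ)⁻¹ else 0)))⁻¹
      = ((X ∪ Y).card : ℝ)⁻¹ := by
    intro i hi
    rw [mem_inter] at hi
    have hsum : (∑ j, max ((if j ∈ X then (X.card : ℝ)⁻¹ else 0) / (if i ∈ X then (X.card : ℝ)⁻¹ else 0))
        ((if j ∈ Y then (Y.card : ℝ)⁻¹ else 0) / (if i ∈ Y then (Y.card : ℝ)⁻¹ else 0)))
        = ∑ j, (if j ∈ X ∪ Y then (1:ℝ) else 0) := by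
      refine Finset.sum_congr rfl fun j _ => ?_
      simp only [hi.1, hi.2, if_true, mem_union]
      by_cases hjx : j ∈ X <;> by_cases hjy : j ∈ Y <;>
        simp [hjx, hjy, div_self (ne_of_gt (inv_pos.mpr hXc)),
          div_self (ne_of_gt (inv_pos.mpr hYc)), le_refl]
    rw [hsum, Finset.sum_ite_mem, Finset.univ_inter, Finset.sum_const, nsmul_eq_mul, mul_one]
  rw [Finset.sum_congr rfl hterm, Finset.sum_const, nsmul_eq_mul, div_eq_mul_inv]
end

section
/- For probability distributions x, y with common support sorted so that the ratios x_i/y_i are monotone, the term of J_P at an index a where x_a/y_a is maximal (and likewise where it is minimal) equals min(x_a, y_a); i.e., J_P(x,y)_a = min(x_a,y_a) at both the argmax and argmin of x_i/y_i. -/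
open Finset

/-- At an index maximizing (resp. minimizing) the ratio `x i / y i`, the corresponding term
of `J_P` equals `min (x a) (y a)`. -/
theorem JP_term_eq_min_at_extremes {n : ℕ} (x y : Fin n → ℝ)
    (hx : ∀ i, 0 < x i) (hy : ∀ i, 0 < y i)
    (hxs : ∑ i, x i = 1) (hys : ∑ i, y i = 1) (a : Fin n) :
    ((∀ i, x i / y i ≤ x a / y a) →
      (∑ j, max (x j / x a) (y j / y a))⁻¹ = min (x a) (y a)) ∧
    ((∀ i, x a / y a ≤ x i / y i) →
      (∑ j, max (x j / x a) (y j / y a))⁻¹ = min (x a) (y a)) := by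
  constructor
  · intro h
    have h1 : ∀ i, x i * y a ≤ x a * y i := by
      intro i
      have := (div_le_div_iff₀ (hy i) (hy a)).1 (h i)
      linarith
    have hmax : ∀ j, max (x j / x a) (y j / y a) = y j / y a := by
      intro j
      refine max_eq_right ?_
      rw [div_le_div_iff₀ (hx a) (hy a)]
      linarith [h1 j]
    have hsum : (∑ j, max (x j / x a) (y j / y a)) = 1 / y a := by
      simp_rw [hmax, div_eq_mul_inv, ← Finset.sum_mul, hys]
    have hya : y a ≤ x a := by
      have hs : (∑ i, x i * y a) ≤ ∑ i, x a * y i :=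
        Finset.sum_le_sum fun i _ => h1 i
      rw [← Finset.sum_mul, hxs, one_mul, ← Finset.mul_sum, hys, mul_one] at hs
      exact hs
    rw [hsum, min_eq_right hya, one_div, inv_inv]
  · intro h
    have h1 : ∀ i, x a * y i ≤ x i * y a := by
      intro i
      have := (div_le_div_iff₀ (hy a) (hy i)).1 (h i)
      linarith
    have hmax : ∀ j, max (x j / x a) (y j / y a) = x j / x a := by
      intro j
      refine max_eq_left ?_
      rw [div_le_div_iff₀ (hy a) (hx a)]
      linarith [h1 j]
    have hsum : (∑ j, max (x j / x a) (y j / y a)) = 1 / x a := by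
      simp_rw [hmax, div_eq_mul_inv, ← Finset.sum_mul, hxs]
    have hxa : x a ≤ y a := by
      have hs : (∑ i, x a * y i) ≤ ∑ i, x i * y a :=
        Finset.sum_le_sum fun i _ => h1 i
      rw [← Finset.mul_sum, hys, mul_one, ← Finset.sum_mul, hxs, one_mul] at hs
      exact hs
    rw [hsum, min_eq_left hxa, one_div, inv_inv]
end

section
/- Merging two coordinates with equal ratio preserves J_P: if x_k/y_k = x_l/y_l for distinct indices k, l, and x', y' are obtained from x, y by replacing coordinates k and l with a single coordinate of mass x_k+x_l and y_k+y_l respectively, then J_P(x', y') = J_P(x, y). -/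
open Finset

/-!
For fixed `c, d` the map `(a, b) ↦ max (a / c) (b / d)` is additive along a ray
`a = r b`, so merging two coordinates of common ratio `r` leaves every inner sum
`∑ j, max (x j / c) (y j / d)` of `J_P` unchanged. Moreover, if `c = r d` this inner sum equals
`T / c` with `T = ∑ j, max (x j) (r * y j)`, so the summands of `J_P` at `k`, at `l` and at the
merged coordinate are `x k / T`, `x l / T` and `(x k + x l) / T`.
-/

section Merge

variable {ι M : Type*} [DecidableEq ι] [AddCommMonoid M]

def mergeCoords (k l : ι) (x : ι → M) : ι → M :=
  Function.update (Function.update x k (x k + x l)) l 0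

variable {k l : ι} (x : ι → M)

@[simp]
lemma mergeCoords_apply_right : mergeCoords k l x l = 0 :=
  Function.update_self _ _ _

@[simp]
lemma mergeCoords_apply_left (hkl : k ≠ l) : mergeCoords k l x k = x k + x l := by
  rw [mergeCoords, Function.update_of_ne hkl, Function.update_self]

lemma mergeCoords_apply_of_ne {j : ι} (hjk : j ≠ k) (hjl : j ≠ l) : mergeCoords k l x j = x j := by
  rw [mergeCoords, Function.update_of_ne hjl, Function.update_of_ne hjk]

lemma Finset.sum_eq_sum_of_merge [Fintype ι] {f g : ι → M} (hkl : k ≠ l)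
    (hk : g k = f k + f l) (hl : g l = 0) (hne : ∀ j, j ≠ k → j ≠ l → g j = f j) :
    ∑ j, g j = ∑ j, f j := by
  have hk_mem : k ∈ univ.erase l := mem_erase.2 ⟨hkl, mem_univ k⟩
  rw [← add_sum_erase univ g (mem_univ l), ← add_sum_erase _ g hk_mem,
    ← add_sum_erase univ f (mem_univ l), ← add_sum_erase _ f hk_mem, hk, hl,
    sum_congr rfl fun j hj => hne j (ne_of_mem_erase hj) (ne_of_mem_erase (mem_of_mem_erase hj))]
  abel

end Merge

lemma max_mul_div_div_eq_mul {b : ℝ} (r p q : ℝ) (hb : 0 ≤ b) :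
    max (r * b / p) (b / q) = b * max (r / p) (1 / q) := by
  rw [mul_max_of_nonneg _ _ hb]
  congr 1 <;> ring

lemma max_div_div_add_of_eq_mul {a b c d : ℝ} (r p q : ℝ) (hb : 0 ≤ b) (hd : 0 ≤ d)
    (ha : a = r * b) (hc : c = r * d) :
    max ((a + c) / p) ((b + d) / q) = max (a / p) (b / q) + max (c / p) (d / q) := by
  rw [ha, hc, ← mul_add, max_mul_div_div_eq_mul r p q hb, max_mul_div_div_eq_mul r p q hd,
    max_mul_div_div_eq_mul r p q (add_nonneg hb hd), add_mul]

variable {ι : Type*} [Fintype ι]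

lemma sum_max_div_mergeCoords [DecidableEq ι] {x y : ι → ℝ} {k l : ι} {r : ℝ} (hkl : k ≠ l)
    (hk : x k = r * y k) (hl : x l = r * y l) (hyk : 0 ≤ y k) (hyl : 0 ≤ y l) (c d : ℝ) :
    ∑ j, max (mergeCoords k l x j / c) (mergeCoords k l y j / d) =
      ∑ j, max (x j / c) (y j / d) := by
  refine sum_eq_sum_of_merge hkl ?_ (by simp) fun j hjk hjl => ?_
  · rw [mergeCoords_apply_left _ hkl, mergeCoords_apply_left _ hkl]
    exact max_div_div_add_of_eq_mul r c d hyk hyl hk hl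
  · rw [mergeCoords_apply_of_ne _ hjk hjl, mergeCoords_apply_of_ne _ hjk hjl]

lemma inv_sum_max_div_mul_div (x y : ι → ℝ) {r d : ℝ} (hr : 0 < r) (hd : 0 < d) :
    (∑ j, max (x j / (r * d)) (y j / d))⁻¹ = r * d / ∑ j, max (x j) (r * y j) := by
  have hrd : 0 < r * d := mul_pos hr hd
  have hterm : ∀ j, max (x j / (r * d)) (y j / d) = max (x j) (r * y j) / (r * d) := fun j => by
    rw [← max_div_div_right hrd.le, mul_div_mul_left _ _ hr.ne']
  simp only [hterm, ← sum_div, inv_div]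

theorem JP_merge_equal_ratio_general {n : ℕ} (x y : Fin n → ℝ)
    (hx : ∀ i, 0 < x i) (hy : ∀ i, 0 < y i)
    (k l : Fin n) (hkl : k ≠ l) (hratio : x k / y k = x l / y l) :
    JP (Function.update (Function.update x k (x k + x l)) l 0)
       (Function.update (Function.update y k (y k + y l)) l 0) = JP x y := by
  change JP (mergeCoords k l x) (mergeCoords k l y) = JP x y
  set r := x k / y k
  have hxk : x k = r * y k := (div_mul_cancel₀ _ (hy k).ne').symm
  have hxl : x l = r * y l := by rw [hratio, div_mul_cancel₀ _ (hy l).ne']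
  have hinner := sum_max_div_mergeCoords hkl hxk hxl (hy k).le (hy l).le
  have hsummand : ∀ c d, 0 < d → c = r * d →
      (∑ j, max (x j / c) (y j / d))⁻¹ = c / ∑ j, max (x j) (r * y j) := by
    rintro c d hd rfl
    exact inv_sum_max_div_mul_div x y (div_pos (hx k) (hy k)) hd
  rw [JP, JP, sum_filter, filter_true_of_mem fun i _ => ⟨hx i, hy i⟩]
  refine sum_eq_sum_of_merge hkl ?_ (by simp) fun j hjk hjl => ?_
  · have hpos := And.intro (add_pos (hx k) (hx l)) (add_pos (hy k) (hy l))
    rw [mergeCoords_apply_left _ hkl, mergeCoords_apply_left _ hkl, if_pos hpos, hinner,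
      hsummand _ _ hpos.2 (by rw [hxk, hxl, mul_add]), hsummand _ _ (hy k) hxk,
      hsummand _ _ (hy l) hxl, add_div]
  · rw [mergeCoords_apply_of_ne _ hjk hjl, mergeCoords_apply_of_ne _ hjk hjl,
      if_pos ⟨hx j, hy j⟩, hinner]

/-- Merging two coordinates with equal ratio preserves `J_P`. -/
theorem JP_merge_equal_ratio {n : ℕ} (x y : Fin n → ℝ)
    (hx : ∀ i, 0 < x i) (hy : ∀ i, 0 < y i)
    (hxs : ∑ i, x i = 1) (hys : ∑ i, y i = 1)
    (k l : Fin n) (hkl : k ≠ l) (hratio : x k / y k = x l / y l) :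
    JP (Function.update (Function.update x k (x k + x l)) l 0)
       (Function.update (Function.update y k (y k + y l)) l 0) = JP x y :=
  JP_merge_equal_ratio_general x y hx hy k l hkl hratio
end

section
/- If w_1,...,w_m are probability distributions with pairwise disjoint supports and alpha, beta are probability vectors in R^m with positive entries, then J_P(sum_k alpha_k w_k, sum_k beta_k w_k) = J_P(alpha, beta). -/
/-!
An atom `i` carries mass of at most one component `w k`, and there the mixtures
`x = ∑ k, α k • w k` and `y = ∑ k, β k • w k` take the values `α k * w k i` and `β k * w k i`. If `w l` is the component carrying `j`, then
`x j / x i = (α l / α k) * (w l j / w k i)`, likewise for `y`, so the maximum of the two ratios is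
`max (α l / α k) (β l / β k) * w l j / w k i`. As each `w l` has mass one, the denominator of
`J_P(x, y)` at `i` is the denominator of `J_P(α, β)` at `k` divided by `w k i`, and summing the
reciprocals over the support of `w k` gives back the `k`-th summand of `J_P(α, β)`.
-/

open Finset

lemma JP_of_pos {κ : Type*} [Fintype κ] {a b : κ → ℝ} (ha : ∀ k, 0 < a k) (hb : ∀ k, 0 < b k) :
    JP a b = ∑ k, (∑ l, max (a l / a k) (b l / b k))⁻¹ := by
  rw [JP, Finset.filter_true_of_mem fun k _ => ⟨ha k, hb k⟩]

lemma max_sum_mul_eq_sum_max_mul {κ : Type*} [Fintype κ] {v : κ → ℝ} (hv : 0 ≤ v)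
    (hsupp : (Function.support v).Subsingleton) (a b : κ → ℝ) :
    max (∑ l, a l * v l) (∑ l, b l * v l) = ∑ l, max (a l) (b l) * v l := by
  obtain hempty | ⟨k, hk⟩ := hsupp.eq_empty_or_singleton
  · simp [Function.support_eq_empty_iff.mp hempty]
  · have hzero : ∀ l ≠ k, v l = 0 := fun l hl =>
      Function.notMem_support.mp (hk ▸ Set.mem_singleton_iff.not.mpr hl)
    have hsingle : ∀ c : κ → ℝ, ∑ l, c l * v l = c k * v k := fun c =>
      Fintype.sum_eq_single k fun l hl => by rw [hzero l hl, mul_zero]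
    rw [hsingle, hsingle, hsingle, max_mul_of_nonneg _ _ (hv k)]

noncomputable def mixture {κ ι : Type*} [Fintype κ] (a : κ → ℝ) (w : κ → ι → ℝ) : ι → ℝ :=
  fun i => ∑ k, a k * w k i

section DisjointSupports

variable {κ ι : Type*} {w : κ → ι → ℝ}

lemma mixture_pos_iff [Fintype κ] (hw : ∀ k i, 0 ≤ w k i) {a : κ → ℝ} (ha : ∀ k, 0 < a k)
    (i : ι) :
    0 < mixture a w i ↔ ∃ k, 0 < w k i := by
  simp only [mixture, Finset.sum_pos_iff_of_nonneg fun k _ => mul_nonneg (ha k).le (hw k i),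
    mem_univ, true_and, mul_pos_iff_of_pos_left (ha _)]

variable (hdisj : ∀ k l, k ≠ l → ∀ i, w k i = 0 ∨ w l i = 0)
include hdisj

lemma support_subsingleton_of_disjoint (i : ι) :
    (Function.support fun k => w k i).Subsingleton := by
  intro k hk l hl
  by_contra hkl
  exact (hdisj k l hkl i).elim hk hl

lemma sum_eq_single_of_disjoint [Fintype κ] {k : κ} {i : ι} (hki : w k i ≠ 0) (f : κ → ℝ → ℝ)
    (hf : ∀ l, f l 0 = 0) : ∑ l, f l (w l i) = f k (w k i) :=
  Fintype.sum_eq_single k fun l hl => by rw [(hdisj l k hl i).resolve_right hki, hf]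

lemma sum_max_div_mixture [Fintype κ] [Fintype ι] (hw : ∀ k i, 0 ≤ w k i)
    (hws : ∀ k, ∑ i, w k i = 1) {k : κ} {i : ι} (hki : 0 < w k i) (a b : κ → ℝ) :
    ∑ j, max (mixture a w j / mixture a w i) (mixture b w j / mixture b w i)
      = (∑ l, max (a l / a k) (b l / b k)) / w k i := by
  have hratio : ∀ (c : κ → ℝ) j,
      mixture c w j / mixture c w i = (∑ l, c l / c k * w l j) / w k i := by
    intro c j
    rw [mixture, mixture, sum_eq_single_of_disjoint hdisj hki.ne' (fun l t => c l * t)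
      fun _ => mul_zero _, ← div_div, Finset.sum_div]
    simp only [div_mul_eq_mul_div]
  simp only [hratio, max_div_div_right hki.le, ← Finset.sum_div,
    max_sum_mul_eq_sum_max_mul (fun l => hw l _) (support_subsingleton_of_disjoint hdisj _)]
  rw [Finset.sum_comm]
  simp only [← Finset.mul_sum, hws, mul_one]

lemma JP_mixture [Fintype κ] [Fintype ι] (hw : ∀ k i, 0 ≤ w k i) (hws : ∀ k, ∑ i, w k i = 1)
    {a b : κ → ℝ} (ha : ∀ k, 0 < a k) (hb : ∀ k, 0 < b k) :
    JP (mixture a w) (mixture b w) = ∑ k, (∑ l, max (a l / a k) (b l / b k))⁻¹ := by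
  have hsummand : ∀ i k, 0 < w k i →
      (∑ j, max (mixture a w j / mixture a w i) (mixture b w j / mixture b w i))⁻¹
        = ∑ l, w l i / ∑ l', max (a l' / a l) (b l' / b l) := by
    intro i k hki
    rw [sum_max_div_mixture hdisj hw hws hki, inv_div,
      sum_eq_single_of_disjoint hdisj hki.ne' (fun l t => t / _) fun _ => zero_div _]
  calc JP (mixture a w) (mixture b w)
      = ∑ i, ∑ k, w k i / ∑ l, max (a l / a k) (b l / b k) := by
        rw [JP]
        refine (Finset.sum_congr rfl fun i hi => ?_).trans (Finset.sum_filter_of_ne ?_)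
        · obtain ⟨k, hki⟩ := (mixture_pos_iff hw ha i).mp (Finset.mem_filter.mp hi).2.1
          exact hsummand i k hki
        · intro i _ hne
          obtain ⟨k, -, hki⟩ := Finset.exists_ne_zero_of_sum_ne_zero hne
          have hki : 0 < w k i := (hw k i).lt_of_ne' (div_ne_zero_iff.mp hki).1
          exact ⟨(mixture_pos_iff hw ha i).mpr ⟨k, hki⟩, (mixture_pos_iff hw hb i).mpr ⟨k, hki⟩⟩
    _ = ∑ k, (∑ l, max (a l / a k) (b l / b k))⁻¹ := by
        rw [Finset.sum_comm]
        simp only [← Finset.sum_div, hws, one_div]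

end DisjointSupports

theorem JP_disjoint_mixture_general {m : ℕ} {ι : Type*} [Fintype ι]
    (w : Fin m → ι → ℝ)
    (hw : ∀ k i, 0 ≤ w k i) (hws : ∀ k, ∑ i, w k i = 1)
    (hdisj : ∀ k l, k ≠ l → ∀ i, w k i = 0 ∨ w l i = 0)
    (α β : Fin m → ℝ) (hα : ∀ k, 0 < α k) (hβ : ∀ k, 0 < β k) :
    JP (fun i => ∑ k, α k * w k i) (fun i => ∑ k, β k * w k i) = JP α β :=
  (JP_mixture hdisj hw hws hα hβ).trans (JP_of_pos hα hβ).symm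

/-- `J_P` of mixtures of distributions with pairwise disjoint supports equals `J_P` of the
mixture weights. -/
theorem JP_disjoint_mixture {m : ℕ} {ι : Type*} [Fintype ι]
    (w : Fin m → ι → ℝ)
    (hw : ∀ k i, 0 ≤ w k i) (hws : ∀ k, ∑ i, w k i = 1)
    (hdisj : ∀ k l, k ≠ l → ∀ i, w k i = 0 ∨ w l i = 0)
    (α β : Fin m → ℝ) (hα : ∀ k, 0 < α k) (hβ : ∀ k, 0 < β k)
    (hαs : ∑ k, α k = 1) (hβs : ∑ k, β k = 1) :
    JP (fun i => ∑ k, α k * w k i) (fun i => ∑ k, β k * w k i) = JP α β :=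
  JP_disjoint_mixture_general w hw hws hdisj α β hα hβ
end

section
/- For probability distributions x and y, if J_W(x,y) = (1-p)/(1+p) (where p is half the L1 distance, i.e., the total variation distance), then (1-p)/(1+p) ≤ J_P(x,y) ≤ 1-p; equivalently J_W(x,y) ≤ J_P(x,y) ≤ 2·J_W(x,y)/(1+J_W(x,y)). -/
open Finset

/-- For probability distributions, `J_P` lies between `(1-p)/(1+p)` and `1-p`, where `p`
is the total variation distance. -/
theorem JP_bounds_of_TV {n : ℕ} (x y : Fin n → ℝ)
    (hx : ∀ i, 0 ≤ x i) (hy : ∀ i, 0 ≤ y i)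
    (hxs : ∑ i, x i = 1) (hys : ∑ i, y i = 1)
    (p : ℝ) (hp : p = (∑ i, |x i - y i|) / 2) :
    (1 - p) / (1 + p) ≤ JP x y ∧ JP x y ≤ 1 - p := by
  classical
  have hp0 : 0 ≤ p := by
    rw [hp]
    have : 0 ≤ ∑ i, |x i - y i| := Finset.sum_nonneg fun i _ => abs_nonneg _
    linarith
  have h1p : (0:ℝ) < 1 + p := by linarith
  have hsum1 : ∑ i, (min (x i) (y i) + max (x i) (y i)) = 2 := by
    simp_rw [min_add_max]
    rw [Finset.sum_add_distrib, hxs, hys]; norm_num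
  have habs : ∀ i, max (x i) (y i) - min (x i) (y i) = |x i - y i| := by
    intro i; rw [max_sub_min_eq_abs, abs_sub_comm]
  have hsum2 : ∑ i, (max (x i) (y i) - min (x i) (y i)) = 2 * p := by
    simp_rw [habs]
    rw [hp]; ring
  rw [Finset.sum_add_distrib] at hsum1
  rw [Finset.sum_sub_distrib] at hsum2
  have hmin : ∑ i, min (x i) (y i) = 1 - p := by linarith
  have hmax : ∑ i, max (x i) (y i) = 1 + p := by linarith
  rw [JP]
  set P := Finset.univ.filter (fun i => 0 < x i ∧ 0 < y i) with hP
  -- per-index bounds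
  have key : ∀ i ∈ P,
      min (x i) (y i) / (1 + p) ≤ (∑ j, max (x j / x i) (y j / y i))⁻¹ ∧
      (∑ j, max (x j / x i) (y j / y i))⁻¹ ≤ min (x i) (y i) := by
    intro i hi
    rw [hP, Finset.mem_filter] at hi
    obtain ⟨-, hxi, hyi⟩ := hi
    set D := ∑ j, max (x j / x i) (y j / y i) with hD
    have hm : 0 < min (x i) (y i) := lt_min hxi hyi
    have hDx : (x i)⁻¹ ≤ D := by
      calc (x i)⁻¹ = ∑ j, x j / x i := by rw [← Finset.sum_div, hxs, one_div]
        _ ≤ D := Finset.sum_le_sum fun j _ => le_max_left _ _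
    have hDy : (y i)⁻¹ ≤ D := by
      calc (y i)⁻¹ = ∑ j, y j / y i := by rw [← Finset.sum_div, hys, one_div]
        _ ≤ D := Finset.sum_le_sum fun j _ => le_max_right _ _
    have hDlow : (min (x i) (y i))⁻¹ ≤ D := by
      rcases min_cases (x i) (y i) with ⟨h, -⟩ | ⟨h, -⟩ <;> rw [h]
      exacts [hDx, hDy]
    have hDpos : 0 < D := lt_of_lt_of_le (by positivity) hDx
    have hDhigh : D ≤ (1 + p) / min (x i) (y i) := by
      have hterm : ∀ j ∈ Finset.univ,
          max (x j / x i) (y j / y i) ≤ max (x j) (y j) / min (x i) (y i) := by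
        intro j _
        have h0 : (0:ℝ) ≤ max (x j) (y j) := le_trans (hx j) (le_max_left _ _)
        apply max_le
        · exact div_le_div₀ h0 (le_max_left _ _) hm (min_le_left _ _)
        · exact div_le_div₀ h0 (le_max_right _ _) hm (min_le_right _ _)
      calc D ≤ ∑ j, max (x j) (y j) / min (x i) (y i) := Finset.sum_le_sum hterm
        _ = (1 + p) / min (x i) (y i) := by rw [← Finset.sum_div, hmax]
    constructor
    · calc min (x i) (y i) / (1 + p) = ((1 + p) / min (x i) (y i))⁻¹ := by
            rw [inv_div]
        _ ≤ D⁻¹ := inv_anti₀ hDpos hDhigh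
    · calc D⁻¹ ≤ ((min (x i) (y i))⁻¹)⁻¹ := inv_anti₀ (by positivity) hDlow
        _ = min (x i) (y i) := inv_inv _
  -- sums of min over P vs univ
  have hPmin : ∑ i ∈ P, min (x i) (y i) = ∑ i, min (x i) (y i) := by
    apply Finset.sum_subset (Finset.subset_univ P)
    intro i _ hi
    rw [hP, Finset.mem_filter] at hi
    have h : ¬(0 < x i ∧ 0 < y i) := fun h => hi ⟨Finset.mem_univ i, h⟩
    rcases not_and_or.mp h with h | h
    · have hx0 : x i = 0 := le_antisymm (not_lt.mp h) (hx i)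
      rw [hx0]; exact min_eq_left (hy i)
    · have hy0 : y i = 0 := le_antisymm (not_lt.mp h) (hy i)
      rw [hy0]; exact min_eq_right (hx i)
  have hPmin' : ∑ i ∈ P, min (x i) (y i) / (1 + p) = (1 - p) / (1 + p) := by
    rw [← Finset.sum_div, hPmin, hmin]
  constructor
  · rw [← hPmin']
    exact Finset.sum_le_sum fun i hi => (key i hi).1
  · refine le_trans (Finset.sum_le_sum fun i hi => (key i hi).2) ?_
    rw [hPmin, hmin]
end

section
/- The lower bound J_P = J_W is achieved: for the three-element distributions x = (0, 1-p, p) and y = (p, 1-p, 0) with 0 < p < 1, J_P(x,y) = (1-p)/(1+p) = J_W(x,y). -/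
/-! Only the middle coordinate lies in both supports, so `J_P` has the single term
`1 / (p/(1-p) + 1 + p/(1-p)) = (1-p)/(1+p)`; the coordinatewise minima and maxima sum to
`1 - p` and `1 + p`. -/

open Finset

theorem JP_eq_inv_of_common_support_eq_singleton {ι : Type*} [Fintype ι] {x y : ι → ℝ} {i : ι}
    (h : ∀ j, 0 < x j ∧ 0 < y j ↔ j = i) :
    JP x y = (∑ j, max (x j / x i) (y j / y i))⁻¹ := by
  classical
  have hfilter : univ.filter (fun j => 0 < x j ∧ 0 < y j) = {i} := by
    ext j
    simp [h]
  rw [JP, hfilter, sum_singleton]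

/-- The lower bound `J_P = J_W` is achieved by `x = (0, 1-p, p)`, `y = (p, 1-p, 0)`. -/
theorem JP_lower_bound_achieved (p : ℝ) (hp0 : 0 < p) (hp1 : p < 1) :
    JP ![0, 1 - p, p] ![p, 1 - p, 0] = (1 - p) / (1 + p) ∧
    (∑ i, min (![0, 1 - p, p] i) (![p, 1 - p, 0] i)) /
      (∑ i, max (![0, 1 - p, p] i) (![p, 1 - p, 0] i)) = (1 - p) / (1 + p) := by
  have hq : 0 < 1 - p := by linarith
  have hcommon : ∀ j, 0 < ![0, 1 - p, p] j ∧ 0 < ![p, 1 - p, 0] j ↔ j = 1 := by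
    intro j
    fin_cases j <;> simp [hq]
  refine ⟨?_, ?_⟩
  · rw [JP_eq_inv_of_common_support_eq_singleton hcommon]
    simp only [Fin.sum_univ_three, Matrix.cons_val_zero, Matrix.cons_val_one, Matrix.cons_val_two,
      Matrix.head_cons, Matrix.tail_cons, zero_div, div_self hq.ne', max_self,
      max_eq_left (div_pos hp0 hq).le, max_eq_right (div_pos hp0 hq).le]
    field_simp
    ring
  · simp only [Fin.sum_univ_three, Matrix.cons_val_zero, Matrix.cons_val_one, Matrix.cons_val_two,
      Matrix.head_cons, Matrix.tail_cons, min_self, max_self, min_eq_left hp0.le,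
      min_eq_right hp0.le, max_eq_right hp0.le, max_eq_left hp0.le]
    ring_nf
end

section
/- The upper bound J_P = 1-p is achieved: for the two-element distributions x = (s+p, t) and y = (s, t+p) with s, t > 0 and s+t+p = 1, J_P(x,y) = 1-p, where p is their total variation distance. -/
open Finset

/-!
Both coordinates of `x = (s+p, t)` and `y = (s, t+p)` are positive, and at each index one
vector dominates all the ratios: `y` at index `0` and `x` at index `1`. The term of index `i`
is then `y i / ∑ y = s` resp. `x i / ∑ x = t`, so `J_P = s + t = 1 - p`.
-/

section

variable {ι : Type*} [Fintype ι]

theorem JP_of_pos_s13 {x y : ι → ℝ} (hx : ∀ i, 0 < x i) (hy : ∀ i, 0 < y i) :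
    JP x y = ∑ i, (∑ j, max (x j / x i) (y j / y i))⁻¹ := by
  classical
  rw [JP, filter_true_of_mem fun i _ => ⟨hx i, hy i⟩]

theorem inv_sum_max_div_eq_of_forall_div_le {x y : ι → ℝ} {i : ι}
    (h : ∀ j, x j / x i ≤ y j / y i) :
    (∑ j, max (x j / x i) (y j / y i))⁻¹ = y i / ∑ j, y j := by
  simp only [max_eq_right (h _), ← sum_div, inv_div]

end

/-- The upper bound `J_P = 1 - p` is achieved by the two-element distributions
`x = (s+p, t)` and `y = (s, t+p)`. -/
theorem JP_upper_bound_achieved (s t p : ℝ) (hs : 0 < s) (ht : 0 < t) (hp : 0 ≤ p)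
    (hsum : s + t + p = 1) :
    JP ![s + p, t] ![s, t + p] = 1 - p := by
  set x : Fin 2 → ℝ := ![s + p, t]
  set y : Fin 2 → ℝ := ![s, t + p]
  have hx : ∀ i, 0 < x i := Fin.forall_fin_two.2 ⟨show 0 < s + p by linarith, ht⟩
  have hy : ∀ i, 0 < y i := Fin.forall_fin_two.2 ⟨hs, show 0 < t + p by linarith⟩
  have hy_dominates_at_0 : ∀ j, x j / x 0 ≤ y j / y 0 := by
    rw [Fin.forall_fin_two, div_self (hx 0).ne', div_self (hy 0).ne',
      div_le_div_iff₀ (hx 0) (hy 0)]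
    exact ⟨le_rfl, show t * s ≤ (t + p) * (s + p) by nlinarith⟩
  have hx_dominates_at_1 : ∀ j, y j / y 1 ≤ x j / x 1 := by
    rw [Fin.forall_fin_two, div_self (hx 1).ne', div_self (hy 1).ne',
      div_le_div_iff₀ (hy 1) (hx 1)]
    exact ⟨show s * t ≤ (s + p) * (t + p) by nlinarith, le_rfl⟩
  have hx_sum : ∑ j, x j = 1 := by rw [Fin.sum_univ_two]; exact (add_right_comm s p t).trans hsum
  have hy_sum : ∑ j, y j = 1 := by rw [Fin.sum_univ_two]; exact (add_assoc s t p).symm.trans hsum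
  rw [JP_of_pos_s13 hx hy, Fin.sum_univ_two, inv_sum_max_div_eq_of_forall_div_le hy_dominates_at_0]
  simp_rw [max_comm (x _ / x 1)]
  rw [inv_sum_max_div_eq_of_forall_div_le hx_dominates_at_1, hx_sum, hy_sum, div_one, div_one]
  show s + t = 1 - p
  linarith
end

section
/- For any two probability distributions x, y on a finite set, 1 - J_P(x,y) ≥ p, where p is the total variation distance; i.e., J_P never exceeds the maximal coupling collision probability 1 - TV(x,y). -/
open Finset

/-- `J_P` never exceeds the maximal coupling collision probability `1 - TV(x,y)`. -/
theorem one_sub_JP_ge_TV {n : ℕ} (x y : Fin n → ℝ)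
    (hx : ∀ i, 0 ≤ x i) (hy : ∀ i, 0 ≤ y i)
    (hxs : ∑ i, x i = 1) (hys : ∑ i, y i = 1) :
    (∑ i, |x i - y i|) / 2 ≤ 1 - JP x y := by
  classical
  have key : JP x y ≤ ∑ i, min (x i) (y i) := by
    have h1 : JP x y ≤ ∑ i ∈ Finset.univ.filter (fun i => 0 < x i ∧ 0 < y i),
        min (x i) (y i) := by
      apply Finset.sum_le_sum
      intro i hi
      simp only [Finset.mem_filter] at hi
      obtain ⟨-, hxi, hyi⟩ := hi
      have hxle : (∑ j, max (x j / x i) (y j / y i))⁻¹ ≤ x i := by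
        have hs : (x i)⁻¹ ≤ ∑ j, max (x j / x i) (y j / y i) := by
          calc (x i)⁻¹ = ∑ j, x j / x i := by
                rw [← Finset.sum_div, hxs, one_div]
            _ ≤ ∑ j, max (x j / x i) (y j / y i) :=
              Finset.sum_le_sum fun j _ => le_max_left _ _
        calc (∑ j, max (x j / x i) (y j / y i))⁻¹ ≤ ((x i)⁻¹)⁻¹ :=
              inv_anti₀ (by positivity) hs
          _ = x i := inv_inv _
      have hyle : (∑ j, max (x j / x i) (y j / y i))⁻¹ ≤ y i := by
        have hs : (y i)⁻¹ ≤ ∑ j, max (x j / x i) (y j / y i) := by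
          calc (y i)⁻¹ = ∑ j, y j / y i := by
                rw [← Finset.sum_div, hys, one_div]
            _ ≤ ∑ j, max (x j / x i) (y j / y i) :=
              Finset.sum_le_sum fun j _ => le_max_right _ _
        calc (∑ j, max (x j / x i) (y j / y i))⁻¹ ≤ ((y i)⁻¹)⁻¹ :=
              inv_anti₀ (by positivity) hs
          _ = y i := inv_inv _
      exact le_min hxle hyle
    refine h1.trans (Finset.sum_le_sum_of_subset_of_nonneg (Finset.filter_subset _ _) ?_)
    intro i _ _
    exact le_min (hx i) (hy i)
  have hmin : ∑ i, min (x i) (y i) = 1 - (∑ i, |x i - y i|) / 2 := by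
    have : ∀ i, min (x i) (y i) = (x i + y i - |x i - y i|) / 2 := fun i =>
      by rw [min_def]; split_ifs with h <;> [rw [abs_of_nonpos (by linarith)]; rw [abs_of_pos (by linarith)]] <;> ring
    simp_rw [this]
    rw [← Finset.sum_div, Finset.sum_sub_distrib, Finset.sum_add_distrib, hxs, hys]
    ring
  linarith [key, hmin]
end

section
/- No sampling scheme dominates the Jaccard index: if X and Y are finite sets with X ≠ Y and G is any coupling of samples uniformly distributed on X and on Y respectively, then it is impossible that simultaneously Pr[G(X)=G(Y)] > J(X,Y), Pr[G(X∪Y∖(X∩Y))=G(X)] ≥ J(X∪Y∖(X∩Y), X), and Pr[G(X∪Y∖(X∩Y))=G(Y)] ≥ J(X∪Y∖(X∩Y), Y), with at least one strict. More precisely: for the symmetric difference Z of X and Y, the three collision events (uniform samples agreeing pairwise) are disjoint, and the Jaccard indices J(X,Y), J(Z,X)=|X∖Y|/|X∪Y|, J(Z,Y)=|Y∖X|/|X∪Y| sum to exactly 1, so no coupling can strictly exceed all three. -/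
/-!
Write `Z = X ∆ Y`. Then `Z ∩ X = X \ Y`, `Z ∩ Y = Y \ X` and `Z ∪ X = Z ∪ Y = X ∪ Y`, so the three
Jaccard indices are `|X ∩ Y|`, `|X \ Y|`, `|Y \ X|` over `|X ∪ Y|` and sum to `1`. On the other
side, almost surely `gX ∈ X`, `gY ∈ Y` and `gZ ∈ Z`; any two of the three collisions force all three
samples to agree, on a point of `X ∩ Y ∩ Z = ∅`. So the collision events are almost surely
disjoint and their probabilities sum to at most `1`.
-/

open MeasureTheory Finset

/-- The Jaccard index of two finite sets. -/
noncomputable def jaccard {ι : Type*} [DecidableEq ι] (A B : Finset ι) : ℝ :=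
  ((A ∩ B).card : ℝ) / ((A ∪ B).card : ℝ)

open scoped symmDiff

namespace Finset

variable {ι : Type*} [DecidableEq ι] (X Y : Finset ι)

lemma symmDiff_inter_left : X ∆ Y ∩ X = X \ Y := by
  ext; simp only [mem_inter, mem_symmDiff, mem_sdiff]; tauto

lemma symmDiff_union_left : X ∆ Y ∪ X = X ∪ Y := by
  ext; simp only [mem_union, mem_symmDiff]; tauto

lemma card_inter_add_card_sdiff_add_card_sdiff : #(X ∩ Y) + #(X \ Y) + #(Y \ X) = #(X ∪ Y) := by
  rw [add_comm #(X ∩ Y), card_sdiff_add_card_inter, ← card_union_of_disjoint disjoint_sdiff,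
    union_sdiff_self_eq_union]

end Finset

section Jaccard

variable {ι : Type*} [DecidableEq ι] (X Y : Finset ι)

lemma jaccard_symmDiff_left : jaccard (X ∆ Y) X = #(X \ Y) / #(X ∪ Y) := by
  rw [jaccard, symmDiff_inter_left, symmDiff_union_left]

lemma jaccard_symmDiff_right : jaccard (X ∆ Y) Y = #(Y \ X) / #(X ∪ Y) := by
  rw [symmDiff_comm, jaccard_symmDiff_left, union_comm]

lemma jaccard_add_jaccard_symmDiff_add_jaccard_symmDiff (h : (X ∪ Y).Nonempty) :
    jaccard X Y + jaccard (X ∆ Y) X + jaccard (X ∆ Y) Y = 1 := by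
  rw [jaccard_symmDiff_left, jaccard_symmDiff_right, jaccard, ← add_div, ← add_div,
    div_eq_one_iff_eq (by simpa using h.card_ne_zero)]
  exact_mod_cast card_inter_add_card_sdiff_add_card_sdiff X Y

end Jaccard

section Coupling

variable {ι Ω : Type*} [MeasurableSpace Ω] {μ : Measure Ω}

lemma ae_mem_of_measureReal_eq_inv_card [IsProbabilityMeasure μ] {g : Ω → ι} {S : Finset ι}
    (hS : S.Nonempty) (hm : ∀ s ∈ S, MeasurableSet {ω | g ω = s})
    (hu : ∀ s ∈ S, μ.real {ω | g ω = s} = (#S : ℝ)⁻¹) : ∀ᵐ ω ∂μ, g ω ∈ S := by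
  have hmS : MeasurableSet (g ⁻¹' S) := by
    rw [← Set.biUnion_preimage_singleton]
    exact S.measurableSet_biUnion hm
  have hS1 : μ.real (g ⁻¹' S) = 1 := by
    rw [← sum_measureReal_preimage_singleton S hm]
    simp only [Set.preimage, Set.mem_singleton_iff]
    rw [sum_congr rfl hu, sum_const, nsmul_eq_mul, mul_inv_cancel₀ (by simpa using hS.card_ne_zero)]
  rw [ae_iff, ← measureReal_eq_zero_iff]
  exact (measureReal_compl hmS).trans (by rw [hS1, probReal_univ, sub_self])

lemma nullMeasurableSet_eq_of_ae_mem {g h : Ω → ι} {S : Finset ι}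
    (hg : ∀ s ∈ S, MeasurableSet {ω | g ω = s}) (hh : ∀ s ∈ S, MeasurableSet {ω | h ω = s})
    (hS : ∀ᵐ ω ∂μ, g ω ∈ S) : NullMeasurableSet {ω | g ω = h ω} μ := by
  refine (S.measurableSet_biUnion fun s hs => (hg s hs).inter (hh s hs)).nullMeasurableSet.congr ?_
  refine Filter.eventuallyEq_set.2 ?_
  filter_upwards [hS] with ω hω
  simp only [Set.mem_iUnion, Set.mem_inter_iff, Set.mem_ofPred_eq]
  exact ⟨fun ⟨s, _, hgs, hhs⟩ => hgs.trans hhs.symm, fun he => ⟨g ω, hω, rfl, he.symm⟩⟩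

lemma ae_not_eq_and_eq_of_ae_mem [DecidableEq ι] {f g h : Ω → ι} {S T U : Finset ι}
    (hf : ∀ᵐ ω ∂μ, f ω ∈ S) (hg : ∀ᵐ ω ∂μ, g ω ∈ T) (hh : ∀ᵐ ω ∂μ, h ω ∈ U)
    (hSTU : Disjoint (S ∩ T) U) : ∀ᵐ ω ∂μ, ¬(f ω = g ω ∧ g ω = h ω) := by
  filter_upwards [hf, hg, hh] with ω hfω hgω hhω ⟨hfg, hgh⟩
  exact disjoint_left.1 hSTU (mem_inter.2 ⟨hfg ▸ hfω, hgω⟩) (hgh ▸ hhω)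

lemma measureReal_add_add_le_one [IsProbabilityMeasure μ] {s t u : Set Ω}
    (ht : NullMeasurableSet t μ) (hu : NullMeasurableSet u μ) (hst : AEDisjoint μ s t)
    (hsu : AEDisjoint μ s u) (htu : AEDisjoint μ t u) : μ.real s + μ.real t + μ.real u ≤ 1 := by
  rw [← measureReal_union₀ ht hst, ← measureReal_union₀ hu (hsu.union_left htu)]
  exact measureReal_le_one

end Coupling

/-- No coupling of uniform samples dominates the Jaccard index: with `Z` the symmetric
difference of `X ≠ Y`, the three pairwise Jaccard indices sum to exactly `1`, and no
coupling of uniform samples on `X`, `Y`, `Z` can have collision probability strictly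
exceeding `J(X,Y)` while matching or exceeding `J(Z,X)` and `J(Z,Y)`. -/
theorem jaccard_pareto_optimal {ι : Type*} [DecidableEq ι]
    (X Y : Finset ι) (hX : X.Nonempty) (hY : Y.Nonempty) (hXY : X ≠ Y)
    (Z : Finset ι) (hZ : Z = (X ∪ Y) \ (X ∩ Y))
    {Ω : Type*} [MeasurableSpace Ω] (μ : Measure Ω) [IsProbabilityMeasure μ]
    (gX gY gZ : Ω → ι)
    (hmX : ∀ s : ι, MeasurableSet {ω | gX ω = s})
    (hmY : ∀ s : ι, MeasurableSet {ω | gY ω = s})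
    (hmZ : ∀ s : ι, MeasurableSet {ω | gZ ω = s})
    (huX : ∀ s : ι, (μ {ω | gX ω = s}).toReal = if s ∈ X then (X.card : ℝ)⁻¹ else 0)
    (huY : ∀ s : ι, (μ {ω | gY ω = s}).toReal = if s ∈ Y then (Y.card : ℝ)⁻¹ else 0)
    (huZ : ∀ s : ι, (μ {ω | gZ ω = s}).toReal = if s ∈ Z then (Z.card : ℝ)⁻¹ else 0) :
    jaccard X Y + jaccard Z X + jaccard Z Y = 1 ∧
    ¬ (jaccard X Y < (μ {ω | gX ω = gY ω}).toReal ∧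
        jaccard Z X ≤ (μ {ω | gZ ω = gX ω}).toReal ∧
        jaccard Z Y ≤ (μ {ω | gZ ω = gY ω}).toReal) := by
  obtain rfl : Z = X ∆ Y := hZ.trans (symmDiff_eq_sup_sdiff_inf X Y).symm
  have hJ := jaccard_add_jaccard_symmDiff_add_jaccard_symmDiff X Y (hX.mono subset_union_left)
  refine ⟨hJ, ?_⟩
  have aeX := ae_mem_of_measureReal_eq_inv_card hX (fun s _ => hmX s)
    fun s hs => (huX s).trans (if_pos hs)
  have aeY := ae_mem_of_measureReal_eq_inv_card hY (fun s _ => hmY s)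
    fun s hs => (huY s).trans (if_pos hs)
  have aeZ := ae_mem_of_measureReal_eq_inv_card (symmDiff_nonempty.2 hXY) (fun s _ => hmZ s)
    fun s hs => (huZ s).trans (if_pos hs)
  have hno_triple := ae_not_eq_and_eq_of_ae_mem aeX aeY aeZ (disjoint_symmDiff_inf X Y).symm
  have aedisj {s t : Set Ω} (hst : s ∩ t ⊆ {ω | gX ω = gY ω ∧ gY ω = gZ ω}) :
      AEDisjoint μ s t :=
    measure_mono_null hst (by simpa using ae_iff.1 hno_triple)
  have hcollisions := measureReal_add_add_le_one (s := {ω | gX ω = gY ω})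
    (nullMeasurableSet_eq_of_ae_mem (fun s _ => hmZ s) (fun s _ => hmX s) aeZ)
    (nullMeasurableSet_eq_of_ae_mem (fun s _ => hmZ s) (fun s _ => hmY s) aeZ)
    (aedisj fun _ ⟨hxy, hzx⟩ => ⟨hxy, hxy.symm.trans hzx.symm⟩)
    (aedisj fun _ ⟨hxy, hzy⟩ => ⟨hxy, hzy.symm⟩)
    (aedisj fun _ ⟨hzx, hzy⟩ => ⟨hzx.symm.trans hzy, hzy.symm⟩)
  rintro ⟨h₁, h₂, h₃⟩
  simp only [measureReal_def] at hcollisions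
  linarith
end

section
/- For sorted ratios and the adversarial distribution z^a, the terms of J_P(x, z^a) below a equal z^a's mass: if indices are ordered so x_i/y_i is nonincreasing and z^a_i = max(x_i/x_a, y_i/y_a)/(sum_k max(x_k/x_a, y_k/y_a)), then for all i ≤ a, J_P(x, z^a)_i = z^a_i = min(x_i, z^a_i), and for all i ≥ a, J_P(x, z^a)_i = 1/(sum_j max(x_j/x_i, y_j/y_i)) = J_P(x,y)_i's value z^i_i. -/
open Finset

/-- With ratios sorted nonincreasingly, the terms of `J_P(x, z^a)` below `a` equal the mass
of `z^a`, and the terms at or above `a` equal the corresponding terms of `J_P(x, y)`. -/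
theorem JP_za_terms {n : ℕ} (x y : Fin n → ℝ)
    (hx : ∀ i, 0 < x i) (hy : ∀ i, 0 < y i)
    (hxs : ∑ i, x i = 1) (hys : ∑ i, y i = 1)
    (hsorted : ∀ i j : Fin n, i ≤ j → x j / y j ≤ x i / y i)
    (a : Fin n)
    (za : Fin n → ℝ)
    (hza : za = fun i => max (x i / x a) (y i / y a) / ∑ k, max (x k / x a) (y k / y a)) :
    (∀ i : Fin n, i ≤ a →
        (∑ j, max (x j / x i) (za j / za i))⁻¹ = za i ∧ za i = min (x i) (za i)) ∧
    (∀ i : Fin n, a ≤ i →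
        (∑ j, max (x j / x i) (za j / za i))⁻¹ = (∑ j, max (x j / x i) (y j / y i))⁻¹) := by
  set m : Fin n → ℝ := fun i => max (x i / x a) (y i / y a) with hm
  set S : ℝ := ∑ k, m k with hS
  have hmpos : ∀ i, 0 < m i := fun i =>
    lt_max_of_lt_left (div_pos (hx i) (hx a))
  have hSpos : 0 < S := Finset.sum_pos (fun i _ => hmpos i) ⟨a, Finset.mem_univ a⟩
  have hzam : ∀ i, za i = m i / S := by intro i; rw [hza]
  have hratio : ∀ i j, za j / za i = m j / m i := by
    intro i j
    rw [hzam, hzam]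
    field_simp
  -- S ≥ 1 / x a
  have hS_ge : (x a)⁻¹ ≤ S := by
    calc (x a)⁻¹ = ∑ k, x k / x a := by
          rw [← Finset.sum_div, hxs, one_div]
      _ ≤ S := Finset.sum_le_sum fun k _ => le_max_left _ _
  constructor
  · intro i hi
    have hmi : m i = x i / x a := by
      have h := hsorted i a hi
      have : y i / y a ≤ x i / x a := by
        rw [div_le_div_iff₀ (hy a) (hx a)]
        rw [div_le_div_iff₀ (hy a) (hy i)] at h
        nlinarith [hy i, hy a, hx a]
      exact max_eq_left this
    have hterm : ∀ j, max (x j / x i) (za j / za i) = m j / m i := by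
      intro j
      rw [hratio]
      refine max_eq_right ?_
      rw [hmi, div_le_div_iff₀ (hx i) (div_pos (hx i) (hx a))]
      have h2 : x j / x a ≤ m j := le_max_left _ _
      calc x j * (x i / x a) = (x j / x a) * x i := by ring
        _ ≤ m j * x i := mul_le_mul_of_nonneg_right h2 (hx i).le
    have hsum : ∑ j, max (x j / x i) (za j / za i) = S / m i := by
      rw [Finset.sum_congr rfl fun j _ => hterm j, ← Finset.sum_div]
    rw [hsum, hzam, inv_div, hmi]
    refine ⟨rfl, (min_eq_right ?_).symm⟩
    rw [div_le_iff₀ hSpos]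
    calc x i / x a = x i * (x a)⁻¹ := by rw [div_eq_mul_inv]
      _ ≤ x i * S := by
          exact mul_le_mul_of_nonneg_left hS_ge (hx i).le
  · intro i hi
    have hmi : m i = y i / y a := by
      have h := hsorted a i hi
      have : x i / x a ≤ y i / y a := by
        rw [div_le_div_iff₀ (hx a) (hy a)]
        rw [div_le_div_iff₀ (hy i) (hy a)] at h
        nlinarith [hy i, hy a, hx a]
      exact max_eq_right this
    have hterm : ∀ j, max (x j / x i) (za j / za i) = max (x j / x i) (y j / y i) := by
      intro j
      rw [hratio, hmi, hm]
      have hA : (x j / x a) / (y i / y a) ≤ x j / x i := by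
        rw [div_le_div_iff₀ (div_pos (hy i) (hy a)) (hx i)]
        have h1 : x i / x a ≤ y i / y a := by
          have h := hsorted a i hi
          rw [div_le_div_iff₀ (hx a) (hy a)]
          rw [div_le_div_iff₀ (hy i) (hy a)] at h
          nlinarith [hy i, hy a, hx a]
        calc x j / x a * x i = x j * (x i / x a) := by ring
          _ ≤ x j * (y i / y a) := by
              exact mul_le_mul_of_nonneg_left h1 (hx j).le
      have hB : (y j / y a) / (y i / y a) = y j / y i := by
        rw [div_div_div_cancel_right₀ (hy a).ne']
      have : max (x j / x a) (y j / y a) / (y i / y a) =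
          max ((x j / x a) / (y i / y a)) ((y j / y a) / (y i / y a)) := by
        rw [max_div_div_right (le_of_lt (div_pos (hy i) (hy a)))]
      rw [this, hB, ← max_assoc, max_eq_left hA]
    exact congrArg _ (Finset.sum_congr rfl fun j _ => hterm j)
end
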